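/- arXiv:1403.1703 — 5 statements merged into one kernel-verified Lean document; each statement's English description precedes it below -/
import Mathlib

section
/- Let h ∈ (0,1) and ρ ∈ [0, π/2]. If s > 0, 1 - s > 0, and the unit complex numbers η₁ = e^{iρ}, η₂ satisfy (1-h) + (1+h)·s·η₁² + (1+h)·(1-s)·η₂² = 0, then s = 2h / ((1+h)(1+h + (1-h)·cos(2ρ))). -/
open Real Complex

/-- The law of cosines: `c` is the length of the third side of a triangle with sides `a`, `b`
enclosing the angle `π - θ`. -/
theorem sq_eq_of_add_mul_exp_add_mul_eq_zero {a b c θ : ℝ} {η : ℂ} (hη : ‖η‖ = 1)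
    (h : (a : ℂ) + b * exp (θ * I) + c * η = 0) :
    c ^ 2 = a ^ 2 + 2 * a * b * Real.cos θ + b ^ 2 := by
  have hnorm : ‖(a : ℂ) + b * exp (θ * I)‖ = |c| := by
    rw [eq_neg_of_add_eq_zero_left h, norm_neg, norm_mul, hη, mul_one, norm_real, Real.norm_eq_abs]
  have hsq := congrArg (· ^ 2) hnorm
  simp only [sq_abs, Complex.sq_norm, normSq_apply, exp_ofReal_mul_I_re, exp_ofReal_mul_I_im,
    add_re, add_im, mul_re, mul_im, ofReal_re, ofReal_im, zero_mul, sub_zero, add_zero,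
    zero_add] at hsq
  linear_combination -hsq + b ^ 2 * Real.sin_sq_add_cos_sq θ

theorem stmt_0_general (h ρ s : ℝ) (η₂ : ℂ)
    (hh0 : 0 < h)
    (hη₂ : ‖η₂‖ = 1)
    (heq : ((1 - h : ℝ) : ℂ) + ((1 + h : ℝ) : ℂ) * (s : ℂ) * (Complex.exp (ρ * Complex.I)) ^ 2
      + ((1 + h : ℝ) : ℂ) * ((1 - s : ℝ) : ℂ) * η₂ ^ 2 = 0) :
    s = 2 * h / ((1 + h) * (1 + h + (1 - h) * Real.cos (2 * ρ))) := by
  have hcos := sq_eq_of_add_mul_exp_add_mul_eq_zero (a := 1 - h) (b := (1 + h) * s)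
    (c := (1 + h) * (1 - s)) (θ := 2 * ρ) (η := η₂ ^ 2) (by rw [norm_pow, hη₂, one_pow]) (by
      rw [← heq, ofReal_mul, ofReal_mul, ofReal_mul, ← Complex.exp_nat_mul]
      push_cast
      ring_nf)
  -- the `s ^ 2` terms cancel, leaving an equation linear in `s`
  have hkey : (1 + h) * (1 + h + (1 - h) * Real.cos (2 * ρ)) * s = 2 * h := by
    linear_combination -hcos / 2
  have hden : (1 + h) * (1 + h + (1 - h) * Real.cos (2 * ρ)) ≠ 0 := by
    rintro hzero
    rw [hzero, zero_mul] at hkey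
    linarith
  exact eq_div_of_mul_eq hden (by linarith)

theorem stmt_0 (h ρ s : ℝ) (η₂ : ℂ)
    (hh0 : 0 < h) (hh1 : h < 1)
    (hρ0 : 0 ≤ ρ) (hρ1 : ρ ≤ Real.pi / 2)
    (hs0 : 0 < s) (hs1 : 0 < 1 - s)
    (hη₂ : ‖η₂‖ = 1)
    (heq : ((1 - h : ℝ) : ℂ) + ((1 + h : ℝ) : ℂ) * (s : ℂ) * (Complex.exp (ρ * Complex.I)) ^ 2
      + ((1 + h : ℝ) : ℂ) * ((1 - s : ℝ) : ℂ) * η₂ ^ 2 = 0) :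
    s = 2 * h / ((1 + h) * (1 + h + (1 - h) * Real.cos (2 * ρ))) :=
  stmt_0_general h ρ s η₂ hh0 hη₂ heq
end

section
/- Let h ∈ (0,1), ρ ∈ (0, π/2), and set s = 2h/((1+h)(1+h+(1-h)cos 2ρ)). If η₂ = e^{iρ̃} with ρ̃ ∈ (-π/2, 0) is a unit complex number satisfying (1-h) + (1+h)s·e^{2iρ} + (1+h)(1-s)·η₂² = 0, then cos(2ρ̃) = (h² - 1 - (1+h²)cos 2ρ) / (1 + h² + (1-h²)cos 2ρ) and sin(2ρ̃) = -2h·sin(2ρ) / (1 + h² + (1-h²)cos 2ρ). -/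
/-! Multiplying the real and imaginary parts of the equation by `D = 1 + h + (1 - h) cos 2ρ`
turns the coefficients into `(1 + h) s D = 2h` and `(1 + h)(1 - s) D = 1 + h² + (1 - h²) cos 2ρ`,
so both parts become linear equations for `cos 2ρ̃` and `sin 2ρ̃`. -/

open Real Complex

theorem one_add_add_one_sub_mul_cos_pos {a : ℝ} (ha : 0 < a) (x : ℝ) :
    0 < 1 + a + (1 - a) * Real.cos x := by
  have h₁ := Real.neg_one_le_cos x
  have h₂ := Real.cos_le_one x
  -- affine in `cos x`, with values `2a` and `2` at `cos x = -1` and `cos x = 1`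
  rcases le_total a 1 with ha₁ | ha₁
  · nlinarith [mul_nonneg (sub_nonneg.2 ha₁) (neg_le_iff_add_nonneg.1 h₁)]
  · nlinarith [mul_nonneg (sub_nonneg.2 ha₁) (sub_nonneg.2 h₂)]

theorem ofReal_add_mul_exp_add_mul_exp_eq_zero_iff (a b c θ φ : ℝ) :
    (a : ℂ) + b * exp (θ * I) + c * exp (φ * I) = 0 ↔
      a + b * Real.cos θ + c * Real.cos φ = 0 ∧ b * Real.sin θ + c * Real.sin φ = 0 := by
  simp only [Complex.ext_iff, add_re, add_im, re_ofReal_mul, im_ofReal_mul, ofReal_re, ofReal_im,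
    exp_ofReal_mul_I_re, exp_ofReal_mul_I_im, zero_re, zero_im, zero_add]

theorem stmt_2_general (h ρ ρ' : ℝ)
    (hh0 : 0 < h)
    (s : ℝ) (hs : s = 2 * h / ((1 + h) * (1 + h + (1 - h) * Real.cos (2 * ρ))))
    (heq : ((1 - h : ℝ) : ℂ) + ((1 + h : ℝ) : ℂ) * (s : ℂ) * Complex.exp (2 * ρ * Complex.I)
      + ((1 + h : ℝ) : ℂ) * ((1 - s : ℝ) : ℂ) * (Complex.exp (ρ' * Complex.I)) ^ 2 = 0) :
    Real.cos (2 * ρ') = (h ^ 2 - 1 - (1 + h ^ 2) * Real.cos (2 * ρ))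
        / (1 + h ^ 2 + (1 - h ^ 2) * Real.cos (2 * ρ)) ∧
    Real.sin (2 * ρ') = -2 * h * Real.sin (2 * ρ)
        / (1 + h ^ 2 + (1 - h ^ 2) * Real.cos (2 * ρ)) := by
  have hD := one_add_add_one_sub_mul_cos_pos hh0 (2 * ρ)
  have hF := one_add_add_one_sub_mul_cos_pos (pow_pos hh0 2) (2 * ρ)
  have hs₁ : (1 + h) * s * (1 + h + (1 - h) * Real.cos (2 * ρ)) = 2 * h := by
    rw [hs]; field_simp
  have hs₂ : (1 + h) * (1 - s) * (1 + h + (1 - h) * Real.cos (2 * ρ))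
      = 1 + h ^ 2 + (1 - h ^ 2) * Real.cos (2 * ρ) := by
    rw [hs]; field_simp; ring
  have hexp : (((1 - h : ℝ) : ℂ) + (((1 + h) * s : ℝ) : ℂ) * exp ((2 * ρ : ℝ) * I)
      + (((1 + h) * (1 - s) : ℝ) : ℂ) * exp ((2 * ρ' : ℝ) * I)) = 0 := by
    rw [← heq, ← Complex.exp_nat_mul]
    push_cast
    ring_nf
  obtain ⟨hre, him⟩ := (ofReal_add_mul_exp_add_mul_exp_eq_zero_iff _ _ _ _ _).1 hexp
  constructor
  · rw [eq_div_iff hF.ne']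
    linear_combination (1 + h + (1 - h) * Real.cos (2 * ρ)) * hre
      - Real.cos (2 * ρ') * hs₂ - Real.cos (2 * ρ) * hs₁
  · rw [eq_div_iff hF.ne']
    linear_combination (1 + h + (1 - h) * Real.cos (2 * ρ)) * him
      - Real.sin (2 * ρ') * hs₂ - Real.sin (2 * ρ) * hs₁

theorem stmt_2 (h ρ ρ' : ℝ)
    (hh0 : 0 < h) (hh1 : h < 1)
    (hρ : ρ ∈ Set.Ioo 0 (Real.pi / 2))
    (hρ' : ρ' ∈ Set.Ioo (-(Real.pi / 2)) 0)
    (s : ℝ) (hs : s = 2 * h / ((1 + h) * (1 + h + (1 - h) * Real.cos (2 * ρ))))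
    (heq : ((1 - h : ℝ) : ℂ) + ((1 + h : ℝ) : ℂ) * (s : ℂ) * Complex.exp (2 * ρ * Complex.I)
      + ((1 + h : ℝ) : ℂ) * ((1 - s : ℝ) : ℂ) * (Complex.exp (ρ' * Complex.I)) ^ 2 = 0) :
    Real.cos (2 * ρ') = (h ^ 2 - 1 - (1 + h ^ 2) * Real.cos (2 * ρ))
        / (1 + h ^ 2 + (1 - h ^ 2) * Real.cos (2 * ρ)) ∧
    Real.sin (2 * ρ') = -2 * h * Real.sin (2 * ρ)
        / (1 + h ^ 2 + (1 - h ^ 2) * Real.cos (2 * ρ)) :=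
  stmt_2_general h ρ ρ' hh0 s hs heq
end

section
/- Let a, b > 0 with (a-b)² < 1, set h = (1-(a-b)²)/(1+(a-b)²+2(a+b)) and s = (1+a-b)/2. Then h/(1+h) < s < 1/(1+h). -/
/-!
Writing `d = a - b`, one has `h / (1 + h) = (1 - d²) / (2 (1 + a + b))`, and the lower bound
reduces to `(1 - d)(1 + d) < (1 + d)(1 + a + b)`, i.e. to `0 < a`. Since `h` is symmetric in
`a, b` while `1 - s` is `s` with `a, b` swapped, the upper bound `s < 1 / (1 + h) = 1 - h / (1 + h)`
is the lower bound for `(b, a)`.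
-/

noncomputable def hParam (a b : ℝ) : ℝ :=
  (1 - (a - b) ^ 2) / (1 + (a - b) ^ 2 + 2 * (a + b))

theorem hParam_comm (a b : ℝ) : hParam b a = hParam a b := by
  unfold hParam
  rw [← neg_sub a b, neg_sq, add_comm b a]

section

variable {a b : ℝ}

theorem one_add_hParam (hab : 0 ≤ a + b) :
    1 + hParam a b = 2 * (1 + a + b) / (1 + (a - b) ^ 2 + 2 * (a + b)) := by
  unfold hParam
  field_simp
  ring

theorem one_add_hParam_pos (hab : 0 ≤ a + b) : 0 < 1 + hParam a b := by
  rw [one_add_hParam hab]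
  exact div_pos (by linarith) (by positivity)

theorem hParam_div_one_add (hab : 0 ≤ a + b) :
    hParam a b / (1 + hParam a b) = (1 - (a - b) ^ 2) / (2 * (1 + a + b)) := by
  rw [one_add_hParam hab, hParam]
  field_simp

theorem hParam_div_one_add_lt (ha : 0 < a) (hab : 0 ≤ a + b) (hd : -1 < a - b) :
    hParam a b / (1 + hParam a b) < (1 + a - b) / 2 := by
  rw [hParam_div_one_add hab, div_lt_div_iff₀ (by linarith) two_pos]
  nlinarith [mul_pos ha (show 0 < 1 + a - b by linarith)]

end

theorem one_div_one_add_eq_one_sub {x : ℝ} (hx : 1 + x ≠ 0) : 1 / (1 + x) = 1 - x / (1 + x) := by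
  field_simp
  ring

theorem stmt_9 (a b : ℝ) (ha : 0 < a) (hb : 0 < b)
    (hab : (a - b) ^ 2 < 1)
    (h s : ℝ)
    (hdef : h = (1 - (a - b) ^ 2) / (1 + (a - b) ^ 2 + 2 * (a + b)))
    (sdef : s = (1 + a - b) / 2) :
    h / (1 + h) < s ∧ s < 1 / (1 + h) := by
  replace hdef : h = hParam a b := hdef
  subst hdef sdef
  have hsum : 0 ≤ a + b := by positivity
  have hd : |a - b| < 1 := (sq_lt_one_iff_abs_lt_one _).mp hab
  have hd' : |b - a| < 1 := abs_sub_comm a b ▸ hd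
  refine ⟨hParam_div_one_add_lt ha hsum (abs_lt.mp hd).1, ?_⟩
  have hswap := hParam_div_one_add_lt hb (by linarith) (abs_lt.mp hd').1
  rw [hParam_comm] at hswap
  rw [one_div_one_add_eq_one_sub (one_add_hParam_pos hsum).ne']
  linarith
end

section
/- Let h ∈ (0,1), λ₁ = 2(1-h), λ₂ = 2(1+h), and fix integers K₀, K₁ with K₁ - √(λ₂/λ₁)·K₀ ≠ 0. Define F(ρ) = (sin ρ̃ / sin ρ)·(K₁ - √(λ₂/λ₁) K₀ cos ρ) + √(λ₂/λ₁) K₀ cos ρ̃, where ρ̃ = arctan(-1/(h tan ρ)) for ρ ∈ (0, π/2). Then F is continuous on (0, π/2), lim_{ρ→0⁺} F(ρ) = -∞·sgn(K₁ - √(λ₂/λ₁) K₀), and lim_{ρ→π/2⁻} F(ρ) = √(λ₂/λ₁) K₀; consequently there exist infinitely many ρ ∈ (0, π/2) with F(ρ) ∈ ℤ. -/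
open Real Filter Set Topology

/-!
As `ρ → 0⁺` we have `ρ̃ → -π/2`, so `sin ρ̃ → -1` and `cos ρ̃ → 0`; the factor `1 / sin ρ` then
drives `F` to `∓∞` according to the sign of `K₁ - √(λ₂/λ₁) K₀`. As `ρ → π/2⁻`, `tan ρ → ∞` and
`ρ̃ → 0`, so `F → √(λ₂/λ₁) K₀`. Since `(0, π/2)` is connected and `F` is continuous, its image is an
interval unbounded on one side, which contains infinitely many integers.
-/

section IntegerValues

variable {X : Type*} {f : X → ℝ} {s : Set X}

lemma infinite_setOf_int_of_subset_image {I : Set ℝ} (hI : {k : ℤ | (k : ℝ) ∈ I}.Infinite)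
    (hIs : I ⊆ f '' s) : {x ∈ s | ∃ k : ℤ, f x = k}.Infinite := by
  intro hfin
  refine hI (((hfin.image f).preimage Int.cast_injective.injOn).subset fun k hk => ?_)
  obtain ⟨x, hx, hxk⟩ := hIs hk
  exact ⟨x, ⟨hx, k, hxk⟩, hxk⟩

variable [TopologicalSpace X] {l : Filter X} [l.NeBot]

lemma infinite_setOf_int_of_tendsto_atTop (hs : IsPreconnected s) (hf : ContinuousOn f s)
    (hsl : s ∈ l) (ht : Tendsto f l atTop) : {x ∈ s | ∃ k : ℤ, f x = k}.Infinite := by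
  obtain ⟨a, ha⟩ := Filter.nonempty_of_mem hsl
  refine infinite_setOf_int_of_subset_image (I := Ici (f a)) ?_
    (hs.intermediate_value_Ici ha (le_principal_iff.2 hsl) hf ht)
  convert Ici_infinite ⌈f a⌉ using 1
  ext k
  simp [Int.ceil_le]

lemma infinite_setOf_int_of_tendsto_atBot (hs : IsPreconnected s) (hf : ContinuousOn f s)
    (hsl : s ∈ l) (ht : Tendsto f l atBot) : {x ∈ s | ∃ k : ℤ, f x = k}.Infinite := by
  obtain ⟨a, ha⟩ := Filter.nonempty_of_mem hsl
  refine infinite_setOf_int_of_subset_image (I := Iic (f a)) ?_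
    (hs.intermediate_value_Iic ha (le_principal_iff.2 hsl) hf ht)
  convert Iic_infinite ⌊f a⌋ using 1
  ext k
  simp [Int.le_floor]

end IntegerValues

noncomputable def rhoTilde (h ρ : ℝ) : ℝ := arctan (-1 / (h * tan ρ))

/-- The paper's `F`, with `a = √(λ₂/λ₁) K₀` and `b = K₁`. -/
noncomputable def angleFun (h a b ρ : ℝ) : ℝ :=
  sin (rhoTilde h ρ) / sin ρ * (b - a * cos ρ) + a * cos (rhoTilde h ρ)

variable {h : ℝ}

lemma Ioo_zero_pi_div_two_mem_nhdsGT : Ioo 0 (π / 2) ∈ 𝓝[>] (0 : ℝ) :=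
  Ioo_mem_nhdsGT (by positivity)

lemma tendsto_sin_nhdsGT_zero : Tendsto sin (𝓝[>] 0) (𝓝[>] 0) := by
  refine tendsto_nhdsWithin_iff.2 ⟨?_, ?_⟩
  · simpa using continuous_sin.continuousWithinAt.tendsto (s := Ioi 0) (x := 0)
  · filter_upwards [Ioo_zero_pi_div_two_mem_nhdsGT] with ρ hρ
    exact sin_pos_of_pos_of_lt_pi hρ.1 (by linarith [hρ.2, pi_pos])

lemma tendsto_tan_nhdsGT_zero : Tendsto tan (𝓝[>] 0) (𝓝[>] 0) := by
  refine tendsto_nhdsWithin_iff.2 ⟨?_, ?_⟩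
  · have htan : ContinuousAt tan 0 := continuousAt_tan.2 (by simp)
    simpa using htan.continuousWithinAt.tendsto (s := Ioi 0)
  · filter_upwards [Ioo_zero_pi_div_two_mem_nhdsGT] with ρ hρ
    exact tan_pos_of_pos_of_lt_pi_div_two hρ.1 hρ.2

lemma continuousOn_rhoTilde (hh : h ≠ 0) : ContinuousOn (rhoTilde h) (Ioo 0 (π / 2)) := by
  have htan : ContinuousOn tan (Ioo 0 (π / 2)) :=
    continuousOn_tan.mono fun ρ hρ => (cos_pos_of_mem_Ioo ⟨by linarith [hρ.1, pi_pos], hρ.2⟩).ne'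
  refine continuous_arctan.comp_continuousOn
    (continuousOn_const.div (continuousOn_const.mul htan) fun ρ hρ => ?_)
  exact mul_ne_zero hh (tan_pos_of_pos_of_lt_pi_div_two hρ.1 hρ.2).ne'

lemma tendsto_rhoTilde_nhdsGT_zero (hh : 0 < h) :
    Tendsto (rhoTilde h) (𝓝[>] 0) (𝓝 (-(π / 2))) := by
  have hinner : Tendsto (fun ρ => -h⁻¹ * (tan ρ)⁻¹) (𝓝[>] 0) atBot :=
    (tendsto_inv_nhdsGT_zero.comp tendsto_tan_nhdsGT_zero).const_mul_atTop_of_neg (by simpa)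
  refine (tendsto_arctan_atBot.mono_right nhdsWithin_le_nhds).comp (hinner.congr fun ρ => ?_)
  ring

lemma tendsto_rhoTilde_nhdsLT_pi_div_two : Tendsto (rhoTilde h) (𝓝[<] (π / 2)) (𝓝 0) := by
  have hinner : Tendsto (fun ρ => -h⁻¹ * (tan ρ)⁻¹) (𝓝[<] (π / 2)) (𝓝 0) := by
    simpa using (tendsto_inv_atTop_zero.comp tendsto_tan_pi_div_two).const_mul (-h⁻¹)
  rw [← arctan_zero]
  exact (continuous_arctan.tendsto 0).comp (hinner.congr fun ρ => by ring)

lemma continuousOn_angleFun (hh : h ≠ 0) (a b : ℝ) :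
    ContinuousOn (angleFun h a b) (Ioo 0 (π / 2)) := by
  have hρt := continuousOn_rhoTilde hh
  have hsin : ∀ ρ ∈ Ioo 0 (π / 2), sin ρ ≠ 0 := fun ρ hρ =>
    (sin_pos_of_pos_of_lt_pi hρ.1 (by linarith [hρ.2, pi_pos])).ne'
  exact (((continuous_sin.comp_continuousOn hρt).div continuous_sin.continuousOn hsin).mul
    (by fun_prop)).add (continuousOn_const.mul (continuous_cos.comp_continuousOn hρt))

lemma tendsto_angleFun_nhdsGT_zero (hh : 0 < h) {a b : ℝ} (hab : b - a ≠ 0) :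
    Tendsto (angleFun h a b) (𝓝[>] 0) (if 0 < b - a then atBot else atTop) := by
  have hρt := tendsto_rhoTilde_nhdsGT_zero hh
  have hcos : Tendsto cos (𝓝[>] 0) (𝓝 1) := by
    simpa using continuous_cos.continuousWithinAt.tendsto (s := Ioi 0) (x := 0)
  have hnum : Tendsto (fun ρ => sin (rhoTilde h ρ) * (b - a * cos ρ)) (𝓝[>] 0)
      (𝓝 (-(b - a))) := by
    simpa using ((continuous_sin.tendsto _).comp hρt).mul ((hcos.const_mul a).const_sub b)
  have hden : Tendsto (fun ρ => (sin ρ)⁻¹) (𝓝[>] 0) atTop :=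
    tendsto_inv_nhdsGT_zero.comp tendsto_sin_nhdsGT_zero
  have hrest : Tendsto (fun ρ => a * cos (rhoTilde h ρ)) (𝓝[>] 0) (𝓝 0) := by
    simpa using ((continuous_cos.tendsto _).comp hρt).const_mul a
  have heq : angleFun h a b =
      fun ρ => sin (rhoTilde h ρ) * (b - a * cos ρ) * (sin ρ)⁻¹ + a * cos (rhoTilde h ρ) := by
    ext ρ
    simp only [angleFun]
    ring
  rw [heq]
  split_ifs with hpos
  · exact (hnum.neg_mul_atTop (by linarith) hden).atBot_add hrest
  · exact (hnum.pos_mul_atTop (neg_pos.2 ((not_lt.1 hpos).lt_of_ne hab))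
      hden).atTop_add hrest

lemma tendsto_angleFun_nhdsLT_pi_div_two (a b : ℝ) :
    Tendsto (angleFun h a b) (𝓝[<] (π / 2)) (𝓝 a) := by
  have hρt := tendsto_rhoTilde_nhdsLT_pi_div_two (h := h)
  have hsin : Tendsto sin (𝓝[<] (π / 2)) (𝓝 1) := by
    simpa using continuous_sin.continuousWithinAt.tendsto (s := Iio (π / 2)) (x := π / 2)
  have hcos : Tendsto cos (𝓝[<] (π / 2)) (𝓝 0) := by
    simpa using continuous_cos.continuousWithinAt.tendsto (s := Iio (π / 2)) (x := π / 2)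
  convert ((((continuous_sin.tendsto 0).comp hρt).div hsin one_ne_zero).mul
    ((hcos.const_mul a).const_sub b)).add
    (((continuous_cos.tendsto 0).comp hρt).const_mul a) using 2 <;> simp [angleFun]

theorem stmt_12_general (h : ℝ) (hh0 : 0 < h)
    (K₀ K₁ : ℤ)
    (c : ℝ)
    (hK : (K₁ : ℝ) - c * (K₀ : ℝ) ≠ 0)
    (F : ℝ → ℝ)
    (hF : ∀ ρ : ℝ, F ρ =
      (Real.sin (Real.arctan (-1 / (h * Real.tan ρ))) / Real.sin ρ) *
        ((K₁ : ℝ) - c * (K₀ : ℝ) * Real.cos ρ) +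
      c * (K₀ : ℝ) * Real.cos (Real.arctan (-1 / (h * Real.tan ρ)))) :
    ContinuousOn F (Set.Ioo 0 (Real.pi / 2)) ∧
    Filter.Tendsto F (nhdsWithin 0 (Set.Ioi 0))
      (if 0 < (K₁ : ℝ) - c * (K₀ : ℝ) then Filter.atBot else Filter.atTop) ∧
    Filter.Tendsto F (nhdsWithin (Real.pi / 2) (Set.Iio (Real.pi / 2)))
      (nhds (c * (K₀ : ℝ))) ∧
    { ρ ∈ Set.Ioo 0 (Real.pi / 2) | ∃ k : ℤ, F ρ = (k : ℝ) }.Infinite := by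
  obtain rfl : F = angleFun h (c * K₀) K₁ := funext hF
  have hcont := continuousOn_angleFun hh0.ne' (c * K₀) K₁
  have hzero := tendsto_angleFun_nhdsGT_zero hh0 hK
  refine ⟨hcont, hzero, tendsto_angleFun_nhdsLT_pi_div_two _ _, ?_⟩
  split_ifs at hzero
  · exact infinite_setOf_int_of_tendsto_atBot isPreconnected_Ioo hcont
      Ioo_zero_pi_div_two_mem_nhdsGT hzero
  · exact infinite_setOf_int_of_tendsto_atTop isPreconnected_Ioo hcont
      Ioo_zero_pi_div_two_mem_nhdsGT hzero

theorem stmt_12 (h : ℝ) (hh0 : 0 < h) (hh1 : h < 1)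
    (K₀ K₁ : ℤ)
    (c : ℝ) (hc : c = Real.sqrt ((2 * (1 + h)) / (2 * (1 - h))))
    (hK : (K₁ : ℝ) - c * (K₀ : ℝ) ≠ 0)
    (F : ℝ → ℝ)
    (hF : ∀ ρ : ℝ, F ρ =
      (Real.sin (Real.arctan (-1 / (h * Real.tan ρ))) / Real.sin ρ) *
        ((K₁ : ℝ) - c * (K₀ : ℝ) * Real.cos ρ) +
      c * (K₀ : ℝ) * Real.cos (Real.arctan (-1 / (h * Real.tan ρ)))) :
    ContinuousOn F (Set.Ioo 0 (Real.pi / 2)) ∧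
    Filter.Tendsto F (nhdsWithin 0 (Set.Ioi 0))
      (if 0 < (K₁ : ℝ) - c * (K₀ : ℝ) then Filter.atBot else Filter.atTop) ∧
    Filter.Tendsto F (nhdsWithin (Real.pi / 2) (Set.Iio (Real.pi / 2)))
      (nhds (c * (K₀ : ℝ))) ∧
    { ρ ∈ Set.Ioo 0 (Real.pi / 2) | ∃ k : ℤ, F ρ = (k : ℝ) }.Infinite :=
  stmt_12_general h hh0 K₀ K₁ c hK F hF
end

section
/- Let a, b > 0 with (a-b)² < 1, set h = (1-(a-b)²)/(1+(a-b)²+2(a+b)) and s = (1+a-b)/2. Then sin²ρ = a(1+(a-b)²+2(a+b)) / ((1+a+b)((a-b)²+a+b)) and cos²ρ = b(1-a+b)² / ((1+a+b)((a-b)²+a+b)), where ρ ∈ (0, π/2) is determined by tan(ρ/2) = (√(s(1-h²)) - √(h(1-s-hs)))/√(s-(1-s)h). -/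
/-!
With `E = 1 + (a - b)² + 2(a + b)`, `p = a E` and `q = b (1 - a + b)²`, the three radicands in
the formula for `tan (ρ / 2)` are `μ (p + q)`, `μ q` and `μ p` for the single positive factor
`μ = 2 (1 + a - b) / E²`, so `tan (ρ / 2) = (√(p + q) - √q) / √p`. This is the half-angle
tangent of the angle with `sin ρ = √p / √(p + q)` and `cos ρ = √q / √(p + q)`, and
`p + q = (1 + a + b)((a - b)² + a + b)`.
-/

open Real

theorem sqrt_mul_sub_sqrt_mul_div_sqrt_mul {μ : ℝ} (hμ : 0 < μ) (x y z : ℝ) :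
    (√(μ * x) - √(μ * y)) / √(μ * z) = (√x - √y) / √z := by
  simp only [sqrt_mul hμ.le, ← mul_sub]
  exact mul_div_mul_left _ _ (sqrt_pos.mpr hμ).ne'

theorem sin_cos_eq_of_tan_half_eq {θ p q : ℝ} (hp : 0 < p) (hq : 0 ≤ q) (hθ : cos θ ≠ -1)
    (ht : tan (θ / 2) = (√(p + q) - √q) / √p) :
    sin θ = √p / √(p + q) ∧ cos θ = √q / √(p + q) := by
  have hu : 0 < √p := sqrt_pos.mpr hp
  have hw : 0 < √(p + q) := sqrt_pos.mpr (by linarith)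
  have hvw : 0 < √(p + q) - √q := sub_pos.mpr (sqrt_lt_sqrt hq (by linarith))
  have hpyth : √(p + q) ^ 2 = √p ^ 2 + √q ^ 2 := by
    rw [sq_sqrt hp.le, sq_sqrt hq, sq_sqrt (by linarith)]
  have hden : 1 + tan (θ / 2) ^ 2 = 2 * √(p + q) * (√(p + q) - √q) / √p ^ 2 := by
    rw [ht]
    field_simp
    linear_combination -hpyth
  rw [sin_eq_two_mul_tan_half_div_one_add_tan_half_sq,
    cos_eq_two_mul_tan_half_div_one_sub_tan_half_sq θ hθ, hden, ht]
  constructor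
  · field_simp [hvw.ne']
  · field_simp [hvw.ne']
    linear_combination -hpyth

theorem tan_half_radical_eq {a b h s : ℝ} (hs : 0 < 1 + a - b)
    (hE : 1 + (a - b) ^ 2 + 2 * (a + b) ≠ 0)
    (hdef : h = (1 - (a - b) ^ 2) / (1 + (a - b) ^ 2 + 2 * (a + b)))
    (sdef : s = (1 + a - b) / 2) :
    (√(s * (1 - h ^ 2)) - √(h * (1 - s - h * s))) / √(s - (1 - s) * h) =
      (√(a * (1 + (a - b) ^ 2 + 2 * (a + b)) + b * (1 - a + b) ^ 2) - √(b * (1 - a + b) ^ 2)) /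
        √(a * (1 + (a - b) ^ 2 + 2 * (a + b))) := by
  set μ := 2 * (1 + a - b) / (1 + (a - b) ^ 2 + 2 * (a + b)) ^ 2 with hμdef
  have hμ : 0 < μ := by positivity
  subst hdef sdef
  have hsum : (1 + a - b) / 2 * (1 - ((1 - (a - b) ^ 2) / (1 + (a - b) ^ 2 + 2 * (a + b))) ^ 2) =
      μ * (a * (1 + (a - b) ^ 2 + 2 * (a + b)) + b * (1 - a + b) ^ 2) := by
    rw [hμdef]
    field_simp
    ring
  have hsub : (1 - (a - b) ^ 2) / (1 + (a - b) ^ 2 + 2 * (a + b)) *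
      (1 - (1 + a - b) / 2 -
        (1 - (a - b) ^ 2) / (1 + (a - b) ^ 2 + 2 * (a + b)) * ((1 + a - b) / 2)) =
      μ * (b * (1 - a + b) ^ 2) := by
    rw [hμdef]
    field_simp
    ring
  have hden : (1 + a - b) / 2 -
      (1 - (1 + a - b) / 2) * ((1 - (a - b) ^ 2) / (1 + (a - b) ^ 2 + 2 * (a + b))) =
      μ * (a * (1 + (a - b) ^ 2 + 2 * (a + b))) := by
    rw [hμdef]
    field_simp
    ring
  rw [hsum, hsub, hden]
  exact sqrt_mul_sub_sqrt_mul_div_sqrt_mul hμ _ _ _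

theorem stmt_13 (a b : ℝ) (ha : 0 < a) (hb : 0 < b) (hab : (a - b) ^ 2 < 1)
    (h s ρ : ℝ)
    (hdef : h = (1 - (a - b) ^ 2) / (1 + (a - b) ^ 2 + 2 * (a + b)))
    (sdef : s = (1 + a - b) / 2)
    (hρ : ρ ∈ Set.Ioo 0 (Real.pi / 2))
    (htan : Real.tan (ρ / 2) =
      (Real.sqrt (s * (1 - h ^ 2)) - Real.sqrt (h * (1 - s - h * s)))
        / Real.sqrt (s - (1 - s) * h)) :
    Real.sin ρ ^ 2 = a * (1 + (a - b) ^ 2 + 2 * (a + b))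
        / ((1 + a + b) * ((a - b) ^ 2 + a + b)) ∧
    Real.cos ρ ^ 2 = b * (1 - a + b) ^ 2
        / ((1 + a + b) * ((a - b) ^ 2 + a + b)) := by
  have hs : 0 < 1 + a - b := by linarith [(abs_lt.mp (sq_lt_one_iff_abs_lt_one _ |>.mp hab)).1]
  have hE : 0 < 1 + (a - b) ^ 2 + 2 * (a + b) := by positivity
  have hp : 0 < a * (1 + (a - b) ^ 2 + 2 * (a + b)) := by positivity
  have hq : 0 ≤ b * (1 - a + b) ^ 2 := by positivity
  have hcos_ne : cos ρ ≠ -1 := by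
    have := cos_pos_of_mem_Ioo ⟨by linarith [hρ.1, pi_pos], hρ.2⟩
    linarith
  obtain ⟨hsin, hcos⟩ :=
    sin_cos_eq_of_tan_half_eq hp hq hcos_ne (htan.trans (tan_half_radical_eq hs hE.ne' hdef sdef))
  have hK : a * (1 + (a - b) ^ 2 + 2 * (a + b)) + b * (1 - a + b) ^ 2 =
      (1 + a + b) * ((a - b) ^ 2 + a + b) := by ring
  rw [hsin, hcos, div_pow, div_pow, sq_sqrt hp.le, sq_sqrt hq, sq_sqrt (by positivity), hK]
  exact ⟨rfl, rfl⟩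
end
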